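/- Let c ≥ 1 be a real number, b ≥ 2 an integer, and d_{b,c,k} the total number of base-b digits in the concatenation, for n = 1, ..., 2b^{k-1} − 1, of the base-b digit string of n repeated ⌊c^{ℓ_b(n)}⌋ times. Then for every k ≥ 1, the number of occurrences of the digit 1 among the first d_{b,c,k} base-b digits of ξ_{ℕ,b,c} satisfies m_{1,b}(ξ_{ℕ,b,c}; d_{b,c,k}) = Σ_{n=1}^{k-1} ⌊c^n⌋·((n−1)·b^{n−2}·(b−1) + b^{n−1}) + ⌊c^k⌋·((k−1)·b^{k−2} + b^{k−1}). -/

import Mathlib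

open Filter

/-- The `i`-th digit (starting from `i = 0`) of the base-`b` expansion of the real `ξ`. -/
noncomputable def digitOf (b : ℕ) (ξ : ℝ) (i : ℕ) : ℕ :=
  (⌊ξ * (b : ℝ) ^ (i + 1)⌋).toNat % b

/-- `m_{k,b}(ξ; n)`: the number of occurrences of the digit `k` among the first `n`
base-`b` digits of `ξ`. -/
noncomputable def digCount (b : ℕ) (ξ : ℝ) (k n : ℕ) : ℕ :=
  ((Finset.range n).filter fun i => digitOf b ξ i = k).card

/-- The ratio appearing in the definition of (simple) strong normality. -/
noncomputable def snRatio (b : ℕ) (ξ : ℝ) (k n : ℕ) : ℝ :=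
  ((digCount b ξ k n : ℝ) - (n : ℝ) / b) / Real.sqrt (2 * n * Real.log (Real.log n))

/-- `ξ` is simply strongly normal to base `b`. -/
def SimplyStronglyNormal (b : ℕ) (ξ : ℝ) : Prop :=
  ∀ k < b,
    Filter.atTop.limsup (fun n : ℕ => (snRatio b ξ k n : EReal))
        = ((Real.sqrt ((b : ℝ) - 1) / b : ℝ) : EReal) ∧
    Filter.atTop.liminf (fun n : ℕ => (snRatio b ξ k n : EReal))
        = ((-(Real.sqrt ((b : ℝ) - 1) / b) : ℝ) : EReal)

/-- `ξ` is strongly normal to base `b`: simply strongly normal to base `b^m` for all `m ≥ 1`. -/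
def StronglyNormal (b : ℕ) (ξ : ℝ) : Prop :=
  ∀ m : ℕ, 1 ≤ m → SimplyStronglyNormal (b ^ m) ξ

/-- `ℓ_b(n)`: the number of base-`b` digits of `n`. -/
def lenb (b n : ℕ) : ℕ := (Nat.digits b n).length

/-- The base-`b` digit string (most significant digit first) of `a`,
repeated `⌊c ^ ℓ_b(a)⌋` times. -/
noncomputable def block (b : ℕ) (c : ℝ) (a : ℕ) : List ℕ :=
  (List.replicate ⌊c ^ lenb b a⌋₊ (Nat.digits b a).reverse).flatten

/-- The concatenation of the blocks of the first `N` elements of `B` (in increasing order). -/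
noncomputable def prefixDigits (b : ℕ) (c : ℝ) (B : Set ℕ) (N : ℕ) : List ℕ :=
  ((List.range N).map fun n => block b c (Nat.nth (· ∈ B) n)).flatten

/-- The `i`-th digit of the infinite concatenation of the blocks of the elements of `B`. -/
noncomputable def xiDigit (b : ℕ) (c : ℝ) (B : Set ℕ) (i : ℕ) : ℕ :=
  (prefixDigits b c B (i + 1)).getD i 0

/-- `ξ_{B,b,c}`: the real number whose base-`b` expansion is the concatenation, over the
elements `a` of `B` in increasing order, of the base-`b` digits of `a` repeated
`⌊c ^ ℓ_b(a)⌋` times. -/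
noncomputable def xiReal (b : ℕ) (c : ℝ) (B : Set ℕ) : ℝ :=
  ∑' i : ℕ, (xiDigit b c B i : ℝ) / (b : ℝ) ^ (i + 1)

/-- `A(x)`: the number of elements of `A` that are at most `x`. -/
noncomputable def countA (A : Set ℕ) (x : ℕ) : ℕ := Set.ncard {n ∈ A | n ≤ x}

/-- `d_{b,c,k}`: the total number of base-`b` digits in the concatenation, for
`n = 1, …, 2·b^(k-1) − 1`, of the base-`b` digit string of `n` repeated `⌊c^{ℓ_b(n)}⌋` times. -/
noncomputable def dTotal (b : ℕ) (c : ℝ) (k : ℕ) : ℕ :=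
  ∑ n ∈ Finset.Icc 1 (2 * b ^ (k - 1) - 1), ⌊c ^ lenb b n⌋₊ * lenb b n

/-- The closed formula for `d_{b,c,k}`. -/
noncomputable def dFormula (b : ℕ) (c : ℝ) (k : ℕ) : ℕ :=
  ⌊c ^ k⌋₊ * k * b ^ (k - 1) +
    ∑ n ∈ Finset.Icc 1 (k - 1), ⌊c ^ n⌋₊ * n * b ^ (n - 1) * (b - 1)

/-!
Up to position `dTotal b c k`, the base-`b` digits of `ξ_{ℕ,b,c}` are those of the word
`block 1 ++ block 2 ++ ⋯ ++ block (2b^(k-1) - 1)`; the expansion is the one read off by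
`digitOf` because it never ends in `(b-1)(b-1)⋯`: the block of each power of `b` starts
with `10`. So the count is `∑ ⌊c^ℓ(n)⌋ · #₁(n)` over `1 ≤ n < 2b^(k-1)`, where `#₁(n)` counts
the ones of `n`. Grouping `n` by length reduces it to values of `G(x) = ∑_{n<x} #₁(n)`.
Splitting off the last digit, `G(bx) = x + b·G(x)`, hence `G(b^t) = t·b^(t-1)` and
`G(2b^t) = 2t·b^(t-1) + b^t`.
-/

open Finset

section DigitCounts

variable {b : ℕ}

lemma count_digits_add_mul (hb : 1 < b) {x : ℕ} (hx : x ≠ 0) {r : ℕ} (hr : r < b) (q : ℕ) :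
    (b.digits (r + b * q)).count x = (if r = x then 1 else 0) + (b.digits q).count x := by
  rcases eq_or_ne (r + b * q) 0 with h | h
  · obtain ⟨rfl, rfl⟩ : r = 0 ∧ q = 0 := by simp_all; omega
    simp [Ne.symm hx]
  · rw [Nat.digits_add b hb r q hr (by contrapose! h; simp [h]), List.count_cons, add_comm]
    simp

lemma sum_range_mul_count_digits (hb : 1 < b) {x : ℕ} (hx : x ≠ 0) (hxb : x < b) (X : ℕ) :
    ∑ n ∈ range (b * X), (b.digits n).count x
      = X + b * ∑ n ∈ range X, (b.digits n).count x := by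
  induction X with
  | zero => simp
  | succ X ih =>
    have hblock :
        ∑ r ∈ range b, (b.digits (b * X + r)).count x = 1 + b * (b.digits X).count x := by
      rw [sum_congr rfl fun r hr => by
        rw [add_comm, count_digits_add_mul hb hx (mem_range.mp hr)]]
      simp [sum_add_distrib, hxb]
    rw [mul_add_one, sum_range_add, ih, hblock, sum_range_succ]
    ring

lemma sum_range_mul_pow_count_digits (hb : 1 < b) {x : ℕ} (hx : x ≠ 0) (hxb : x < b)
    (X t : ℕ) :
    ∑ n ∈ range (X * b ^ t), (b.digits n).count x
      = t * X * b ^ (t - 1) + b ^ t * ∑ n ∈ range X, (b.digits n).count x := by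
  induction t with
  | zero => simp
  | succ t ih =>
    rw [pow_succ', mul_left_comm, sum_range_mul_count_digits hb hx hxb, ih]
    rcases t with _ | t
    · simp
    · simp only [Nat.add_sub_cancel, pow_succ]
      ring

lemma sum_range_pow_count_one_digits (hb : 1 < b) (t : ℕ) :
    ∑ n ∈ range (b ^ t), (b.digits n).count 1 = t * b ^ (t - 1) := by
  simpa using sum_range_mul_pow_count_digits hb one_ne_zero hb 1 t

lemma sum_range_two_mul_pow_count_one_digits (hb : 1 < b) (t : ℕ) :
    ∑ n ∈ range (2 * b ^ t), (b.digits n).count 1 = 2 * t * b ^ (t - 1) + b ^ t := by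
  have h2 : ∑ n ∈ range 2, (b.digits n).count 1 = 1 := by
    simp [sum_range_succ, Nat.digits_of_lt b 1 one_ne_zero hb]
  rw [sum_range_mul_pow_count_digits hb one_ne_zero hb, h2]
  ring

lemma sum_Ico_pow_count_one_digits (hb : 1 < b) (m : ℕ) :
    ∑ n ∈ Ico (b ^ m) (b ^ (m + 1)), (b.digits n).count 1
      = m * b ^ (m - 1) * (b - 1) + b ^ m := by
  have h := sum_range_add_sum_Ico (fun n => (b.digits n).count 1)
    (Nat.pow_le_pow_right (by omega : 0 < b) m.le_succ)
  rw [sum_range_pow_count_one_digits hb, sum_range_pow_count_one_digits hb] at h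
  obtain ⟨b, rfl⟩ : ∃ b', b = b' + 1 := ⟨b - 1, by omega⟩
  rcases m with _ | m
  · simp only [zero_tsub, pow_zero, mul_one, zero_add, pow_one, tsub_self, zero_mul] at h ⊢
    omega
  · have hpow : (m + 1) * (b + 1) ^ m + ((m + 1) * (b + 1) ^ m * b + (b + 1) ^ (m + 1))
        = (m + 1 + 1) * (b + 1) ^ (m + 1) := by ring
    simp only [Nat.add_sub_cancel, Nat.succ_eq_add_one] at h ⊢
    linarith

lemma sum_Ico_two_mul_pow_count_one_digits (hb : 1 < b) (m : ℕ) :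
    ∑ n ∈ Ico (b ^ m) (2 * b ^ m), (b.digits n).count 1 = m * b ^ (m - 1) + b ^ m := by
  have h := sum_range_add_sum_Ico (fun n => (b.digits n).count 1)
    (Nat.le_mul_of_pos_left (b ^ m) two_pos)
  rw [sum_range_pow_count_one_digits hb, sum_range_two_mul_pow_count_one_digits hb] at h
  linarith

lemma lenb_eq_of_mem_Ico (hb : 1 < b) {m n : ℕ} (hn : n ∈ Ico (b ^ m) (b ^ (m + 1))) :
    lenb b n = m + 1 := by
  rw [mem_Ico] at hn
  have hn0 : n ≠ 0 := (Nat.pow_pos (n := m) (by omega : 0 < b)).trans_le hn.1 |>.ne'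
  rw [lenb, Nat.length_digits b n hb hn0, Nat.log_eq_of_pow_le_of_lt_pow hn.1 hn.2]

lemma sum_Ico_pow_weighted_count_one (hb : 1 < b) (w : ℕ → ℕ) {m M : ℕ}
    (hM : M ≤ b ^ (m + 1)) :
    ∑ n ∈ Ico (b ^ m) M, w (lenb b n) * (b.digits n).count 1
      = w (m + 1) * ∑ n ∈ Ico (b ^ m) M, (b.digits n).count 1 := by
  rw [mul_sum]
  refine sum_congr rfl fun n hn => ?_
  rw [lenb_eq_of_mem_Ico hb (Ico_subset_Ico_right hM hn)]

lemma sum_Ico_one_pow_weighted_count_one (hb : 1 < b) (w : ℕ → ℕ) (K : ℕ) :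
    ∑ n ∈ Ico 1 (b ^ K), w (lenb b n) * (b.digits n).count 1
      = ∑ m ∈ Icc 1 K, w m * ((m - 1) * b ^ (m - 2) * (b - 1) + b ^ (m - 1)) := by
  induction K with
  | zero => simp
  | succ K ih =>
    rw [← sum_Ico_consecutive _ (Nat.one_le_pow K b (by omega))
        (Nat.pow_le_pow_right (by omega : 0 < b) K.le_succ), ih,
      sum_Ico_pow_weighted_count_one hb w le_rfl, sum_Ico_pow_count_one_digits hb,
      sum_Icc_succ_top (by omega)]
    simp [show K + 1 - 2 = K - 1 by omega]

lemma sum_Ico_one_two_mul_pow_weighted_count_one (hb : 1 < b) (w : ℕ → ℕ) {k : ℕ}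
    (hk : 1 ≤ k) :
    ∑ n ∈ Ico 1 (2 * b ^ (k - 1)), w (lenb b n) * (b.digits n).count 1
      = ∑ m ∈ Icc 1 (k - 1), w m * ((m - 1) * b ^ (m - 2) * (b - 1) + b ^ (m - 1))
        + w k * ((k - 1) * b ^ (k - 2) + b ^ (k - 1)) := by
  obtain ⟨K, rfl⟩ : ∃ K, k = K + 1 := ⟨k - 1, by omega⟩
  have h2K : 2 * b ^ K ≤ b ^ (K + 1) := by
    rw [pow_succ']
    exact Nat.mul_le_mul_right _ hb
  simp only [Nat.add_sub_cancel]
  rw [← sum_Ico_consecutive _ (Nat.one_le_pow K b (by omega)) (Nat.le_mul_of_pos_left _ two_pos),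
    sum_Ico_one_pow_weighted_count_one hb, sum_Ico_pow_weighted_count_one hb w h2K,
    sum_Ico_two_mul_pow_count_one_digits hb, show K + 1 - 2 = K - 1 by omega]

end DigitCounts

section RealDigits

variable {b : ℕ}

lemma Real.ofDigits_lt_one (hb : 1 < b) (a : ℕ → Fin b) {j : ℕ} (hj : (a j : ℕ) + 1 < b) :
    Real.ofDigits a < 1 := by
  rw [← Real.ofDigits_const_last_eq_one' hb]
  refine Summable.tsum_lt_tsum (i := j) (fun i => ?_) ?_ Real.summable_ofDigitsTerm
    Real.summable_ofDigitsTerm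
  · unfold Real.ofDigitsTerm
    gcongr
    exact Nat.le_sub_one_of_lt (a i).isLt
  · unfold Real.ofDigitsTerm
    gcongr
    exact Nat.lt_sub_of_add_lt hj

lemma Real.ofDigits_mul_base (a : ℕ → Fin b) :
    Real.ofDigits a * b = a 0 + Real.ofDigits (fun i => a (i + 1)) := by
  have hb : (b : ℝ) ≠ 0 := by exact_mod_cast (a 0).pos.ne'
  rw [Real.ofDigits_eq_sum_add_ofDigits a 1]
  simp only [range_one, Real.ofDigitsTerm, sum_singleton, zero_add, pow_one]
  field_simp

lemma digitOf_succ (ξ : ℝ) (i : ℕ) : digitOf b ξ (i + 1) = digitOf b (ξ * b) i := by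
  rw [digitOf, digitOf, pow_succ', mul_assoc]

lemma digitOf_natCast_add (n : ℕ) {ξ : ℝ} (hξ : 0 ≤ ξ) (i : ℕ) :
    digitOf b (n + ξ) i = digitOf b ξ i := by
  have hpow : (b : ℝ) ^ (i + 1) = ((b ^ i * b : ℕ) : ℝ) := by push_cast; ring
  rw [digitOf, digitOf, Int.floor_toNat, Int.floor_toNat, add_mul, add_comm, hpow,
    ← Nat.cast_mul, Nat.floor_add_natCast (by positivity), ← mul_assoc,
    Nat.add_mul_mod_self_right]

lemma digitOf_ofDigits (hb : 1 < b) (a : ℕ → Fin b)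
    (ha : ∃ᶠ j in atTop, (a j : ℕ) + 1 < b) (i : ℕ) :
    digitOf b (Real.ofDigits a) i = a i := by
  induction i generalizing a with
  | zero =>
    obtain ⟨j, hj, hlt⟩ := frequently_atTop.mp ha 1
    obtain ⟨j, rfl⟩ : ∃ j', j = j' + 1 := ⟨j - 1, by omega⟩
    have htail := Real.ofDigits_lt_one hb (fun i => a (i + 1)) hlt
    rw [digitOf, zero_add, pow_one, Real.ofDigits_mul_base, Int.floor_toNat, add_comm,
      Nat.floor_add_natCast (Real.ofDigits_nonneg _), Nat.floor_eq_zero.mpr htail, zero_add,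
      Nat.mod_eq_of_lt (a 0).isLt]
  | succ i ih =>
    have ha' : ∃ᶠ j in atTop, (a (j + 1) : ℕ) + 1 < b := by
      rw [frequently_atTop] at ha ⊢
      intro i
      obtain ⟨j, hj, hlt⟩ := ha (i + 1)
      exact ⟨j - 1, by omega, by rwa [Nat.sub_add_cancel (by omega)]⟩
    rw [digitOf_succ, Real.ofDigits_mul_base, digitOf_natCast_add _ (Real.ofDigits_nonneg _),
      ih _ ha']

end RealDigits

lemma List.card_filter_range_getD_eq_count (L : List ℕ) (x : ℕ) :
    #{i ∈ Finset.range L.length | L.getD i 0 = x} = L.count x := by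
  induction L with
  | nil => simp
  | cons a L ih =>
    rw [card_filter, List.length_cons, Finset.sum_range_succ', List.count_cons]
    simp only [List.getD_cons_succ, List.getD_cons_zero]
    rw [← card_filter, ih]
    simp

section Concatenation
variable {b : ℕ} {c : ℝ} {B : Set ℕ}

lemma prefixDigits_succ (N : ℕ) :
    prefixDigits b c B (N + 1) = prefixDigits b c B N ++ block b c (Nat.nth (· ∈ B) N) := by
  simp [prefixDigits, List.range_succ]

lemma prefixDigits_prefix_of_le {N M : ℕ} (h : N ≤ M) :
    prefixDigits b c B N <+: prefixDigits b c B M := by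
  induction M, h using Nat.le_induction with
  | base => exact List.prefix_refl _
  | succ M _ ih => exact ih.trans (prefixDigits_succ M ▸ List.prefix_append _ _)

lemma xiDigit_eq_getD {i N : ℕ} (hi : i < (prefixDigits b c B (i + 1)).length)
    (hN : i < (prefixDigits b c B N).length) :
    xiDigit b c B i = (prefixDigits b c B N).getD i 0 := by
  have getD_of_prefix {l₁ l₂ : List ℕ} (h : l₁ <+: l₂) (hl : i < l₁.length) :
      l₁.getD i 0 = l₂.getD i 0 := by
    obtain ⟨t, rfl⟩ := h
    exact (List.getD_append _ _ _ _ hl).symm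
  rw [xiDigit]
  rcases le_total N (i + 1) with h | h
  · exact (getD_of_prefix (prefixDigits_prefix_of_le h) hN).symm
  · exact getD_of_prefix (prefixDigits_prefix_of_le h) hi

lemma length_block (a : ℕ) : (block b c a).length = ⌊c ^ lenb b a⌋₊ * lenb b a := by
  simp [block, lenb, List.sum_replicate]

lemma count_block (x a : ℕ) :
    (block b c a).count x = ⌊c ^ lenb b a⌋₊ * (b.digits a).count x := by
  simp [block, List.count_flatten, List.sum_replicate]

lemma length_prefixDigits (N : ℕ) :
    (prefixDigits b c B N).length
      = ∑ n ∈ range N, (block b c (Nat.nth (· ∈ B) n)).length := by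
  induction N with
  | zero => simp [prefixDigits]
  | succ N ih => rw [prefixDigits_succ, List.length_append, ih, sum_range_succ]

lemma count_prefixDigits (x N : ℕ) :
    (prefixDigits b c B N).count x
      = ∑ n ∈ range N, (block b c (Nat.nth (· ∈ B) n)).count x := by
  induction N with
  | zero => simp [prefixDigits]
  | succ N ih => rw [prefixDigits_succ, List.count_append, ih, sum_range_succ]

lemma xiDigit_lt (hb : 1 < b) (i : ℕ) : xiDigit b c B i < b := by
  rw [xiDigit]
  rcases lt_or_ge i (prefixDigits b c B (i + 1)).length with h | h
  · obtain ⟨_, hmem, hx⟩ :=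
      List.mem_flatten.mp (List.getD_eq_getElem _ _ h ▸ List.getElem_mem h)
    obtain ⟨n, -, rfl⟩ := List.mem_map.mp hmem
    obtain ⟨_, hl, hx⟩ := List.mem_flatten.mp hx
    rw [(List.mem_replicate.mp hl).2, List.mem_reverse] at hx
    exact Nat.digits_lt_base hb hx
  · rw [List.getD_eq_default _ _ h]
    omega

lemma xiReal_eq_ofDigits (hb : 1 < b) :
    xiReal b c B = Real.ofDigits fun i => ⟨xiDigit b c B i, xiDigit_lt hb i⟩ := by
  simp [xiReal, Real.ofDigits, Real.ofDigitsTerm, div_eq_mul_inv]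

lemma digitOf_xiReal (hb : 1 < b) (hfreq : ∃ᶠ j in atTop, xiDigit b c B j + 1 < b) (i : ℕ) :
    digitOf b (xiReal b c B) i = xiDigit b c B i := by
  rw [xiReal_eq_ofDigits hb]
  exact digitOf_ofDigits hb _ hfreq i

lemma digCount_xiReal_length_prefixDigits (hb : 1 < b)
    (hlong : ∀ N, N ≤ (prefixDigits b c B N).length)
    (hfreq : ∃ᶠ j in atTop, xiDigit b c B j + 1 < b) (x N : ℕ) :
    digCount b (xiReal b c B) x (prefixDigits b c B N).length
      = (prefixDigits b c B N).count x := by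
  rw [digCount, ← List.card_filter_range_getD_eq_count]
  refine congrArg card (filter_congr fun i hi => ?_)
  rw [digitOf_xiReal hb hfreq, xiDigit_eq_getD (hlong (i + 1)) (mem_range.mp hi)]

end Concatenation

section PositiveIntegers
variable {b : ℕ} {c : ℝ}

lemma nth_mem_setOf_pos (i : ℕ) : Nat.nth (· ∈ {n : ℕ | 0 < n}) i = i + 1 := by
  have hcount : Nat.count (· ∈ {n : ℕ | 0 < n}) (i + 1) = i := by simp [Nat.count_succ']
  have := Nat.nth_count (p := (· ∈ {n : ℕ | 0 < n})) (n := i + 1) i.succ_pos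
  rwa [hcount] at this

lemma sum_range_nth_mem_setOf_pos (f : ℕ → ℕ) (N : ℕ) :
    ∑ n ∈ range N, f (Nat.nth (· ∈ {n : ℕ | 0 < n}) n) = ∑ n ∈ Icc 1 N, f n := by
  simp_rw [nth_mem_setOf_pos, range_eq_Ico, sum_Ico_add', zero_add, Ico_add_one_right_eq_Icc]

lemma length_prefixDigits_pos (N : ℕ) :
    (prefixDigits b c {n | 0 < n} N).length
      = ∑ n ∈ Icc 1 N, ⌊c ^ lenb b n⌋₊ * lenb b n := by
  simp_rw [length_prefixDigits, length_block]
  exact sum_range_nth_mem_setOf_pos (fun n => ⌊c ^ lenb b n⌋₊ * lenb b n) N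

lemma count_prefixDigits_pos (x N : ℕ) :
    (prefixDigits b c {n | 0 < n} N).count x
      = ∑ n ∈ Icc 1 N, ⌊c ^ lenb b n⌋₊ * (b.digits n).count x := by
  simp_rw [count_prefixDigits, count_block]
  exact sum_range_nth_mem_setOf_pos (fun n => ⌊c ^ lenb b n⌋₊ * (b.digits n).count x) N

lemma le_length_prefixDigits_pos (hc : 1 ≤ c) (N : ℕ) :
    N ≤ (prefixDigits b c {n | 0 < n} N).length := by
  rw [length_prefixDigits_pos]
  calc N = ∑ n ∈ Icc 1 N, 1 := by simp
    _ ≤ _ := sum_le_sum fun n hn => by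
      have hlen : 1 ≤ lenb b n := List.length_pos_iff.mpr
        (Nat.digits_ne_nil_iff_ne_zero.mpr (by grind))
      simpa using Nat.mul_le_mul ((Nat.one_le_floor_iff _).mpr (one_le_pow₀ hc)) hlen

lemma reverse_digits_base_pow (hb : 1 < b) (t : ℕ) :
    (b.digits (b ^ t)).reverse = 1 :: List.replicate t 0 := by
  simpa [Nat.digits_of_lt b 1 one_ne_zero hb] using
    congrArg List.reverse (Nat.digits_base_pow_mul (k := t) hb one_pos)

lemma block_base_pow_eq (hb : 1 < b) (hc : 1 ≤ c) (t : ℕ) :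
    ∃ l, block b c (b ^ t) = 1 :: List.replicate t 0 ++ l := by
  obtain ⟨m, hm⟩ := Nat.exists_eq_add_one.mpr
    ((Nat.one_le_floor_iff (c ^ lenb b (b ^ t))).mpr (one_le_pow₀ hc))
  exact ⟨_, by
    rw [block, hm, List.replicate_succ, List.flatten_cons, reverse_digits_base_pow hb]⟩

lemma frequently_xiDigit_pos_eq_zero (hb : 1 < b) (hc : 1 ≤ c) :
    ∃ᶠ j in atTop, xiDigit b c {n | 0 < n} j = 0 := by
  rw [frequently_atTop]
  intro i
  set N := b ^ (i + 1) - 1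
  set L := prefixDigits b c {n | 0 < n} N
  have hN : N + 1 = b ^ (i + 1) := Nat.sub_add_cancel (Nat.one_le_pow _ _ (by omega))
  have hiN : i ≤ N := by have := Nat.lt_pow_self (n := i + 1) hb; omega
  have hLN : N ≤ L.length := le_length_prefixDigits_pos hc N
  obtain ⟨l, hl⟩ := block_base_pow_eq hb hc (i + 1)
  have hsucc :
      prefixDigits b c {n | 0 < n} (N + 1) = L ++ (1 :: 0 :: List.replicate i 0 ++ l) := by
    rw [prefixDigits_succ, nth_mem_setOf_pos, hN, hl, List.replicate_succ]
  refine ⟨L.length + 1, by omega, ?_⟩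
  rw [xiDigit_eq_getD (N := N + 1) (le_length_prefixDigits_pos hc _) (by simp [hsucc]), hsucc]
  simp

lemma digCount_xiReal_pos (hb : 1 < b) (hc : 1 ≤ c) (x N : ℕ) :
    digCount b (xiReal b c {n | 0 < n}) x (prefixDigits b c {n | 0 < n} N).length
      = ∑ n ∈ Icc 1 N, ⌊c ^ lenb b n⌋₊ * (b.digits n).count x := by
  rw [digCount_xiReal_length_prefixDigits hb (le_length_prefixDigits_pos hc)
    ((frequently_xiDigit_pos_eq_zero hb hc).mono fun j hj => by omega), count_prefixDigits_pos]

end PositiveIntegers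

/-- The exact count of the digit `1` among the first `d_{b,c,k}` base-`b` digits of
`ξ_{ℕ,b,c}`. -/
theorem digCount_one_champernowne_eq (b : ℕ) (hb : 2 ≤ b) (c : ℝ) (hc : 1 ≤ c)
    (k : ℕ) (hk : 1 ≤ k) :
    digCount b (xiReal b c {n : ℕ | 0 < n}) 1 (dTotal b c k) =
      ∑ n ∈ Finset.Icc 1 (k - 1),
          ⌊c ^ n⌋₊ * ((n - 1) * b ^ (n - 2) * (b - 1) + b ^ (n - 1))
        + ⌊c ^ k⌋₊ * ((k - 1) * b ^ (k - 2) + b ^ (k - 1)) := by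
  have hdTotal : dTotal b c k = (prefixDigits b c {n | 0 < n} (2 * b ^ (k - 1) - 1)).length :=
    (length_prefixDigits_pos _).symm
  rw [hdTotal, digCount_xiReal_pos hb hc, ← Ico_add_one_right_eq_Icc,
    Nat.sub_add_cancel (by have := Nat.one_le_pow (k - 1) b (by omega); omega),
    sum_Ico_one_two_mul_pow_weighted_count_one hb (fun m => ⌊c ^ m⌋₊) hk]
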